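/- Let G be a finite abelian group and let F be a functor from P(G) to types. Then the set of sections of F over P(G) is in canonical bijection with the set of families (x_H)_{H a subgroup of G}, with x_H ∈ F({H}), satisfying the compatibility condition: for every pair of subgroups H1 ⊊ H2 of G, the images of x_{H1} and x_{H2} in F({H1, H2}) under the structure maps F({H1} ≤ {H1,H2}) and F({H2} ≤ {H1,H2}) coincide. The bijection sends a section (x_S)_{S ∈ P(G)} to its components at singletons. -/
import Mathlib


open CategoryTheory

/-- `P(G)`: the poset of nonempty sets of subgroups of `G` that are totally ordered by
inclusion, ordered by set inclusion. -/
abbrev ChainPoset (G : Type*) [Group G] : Type _ :=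
  {S : Set (Subgroup G) // S.Nonempty ∧ IsChain (· ≤ ·) S}

/-- The singleton `{H} ∈ P(G)` associated to a subgroup `H ⊆ G`. -/
def ChainPoset.sing {G : Type*} [Group G] (H : Subgroup G) : ChainPoset G :=
  ⟨{H}, Set.singleton_nonempty H, Set.subsingleton_singleton.isChain⟩

/-- The pair `{H₁, H₂} ∈ P(G)` associated to subgroups `H₁ ≤ H₂` of `G`. -/
def ChainPoset.pair {G : Type*} [Group G] (H1 H2 : Subgroup G) (h : H1 ≤ H2) :
    ChainPoset G :=
  ⟨{H1, H2}, ⟨H1, Or.inl rfl⟩, by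
    intro a ha b hb _
    simp only [Set.mem_insert_iff, Set.mem_singleton_iff] at ha hb
    rcases ha with rfl | rfl <;> rcases hb with rfl | rfl
    exacts [Or.inl le_rfl, Or.inl h, Or.inr h, Or.inl le_rfl]⟩

lemma ChainPoset.sing_le_pair_left {G : Type*} [Group G] {H1 H2 : Subgroup G}
    (h : H1 ≤ H2) : ChainPoset.sing H1 ≤ ChainPoset.pair H1 H2 h := by
  intro a ha
  simp only [ChainPoset.sing, Set.mem_singleton_iff] at ha
  subst ha
  exact Set.mem_insert _ _

lemma ChainPoset.sing_le_pair_right {G : Type*} [Group G] {H1 H2 : Subgroup G}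
    (h : H1 ≤ H2) : ChainPoset.sing H2 ≤ ChainPoset.pair H1 H2 h := by
  intro a ha
  simp only [ChainPoset.sing, Set.mem_singleton_iff] at ha
  subst ha
  exact Set.mem_insert_iff.mpr (Or.inr rfl)

/-- `{H} ≤ S` whenever `H ∈ S`. -/
def ChainPoset.singLe {G : Type*} [Group G] {H : Subgroup G} {S : ChainPoset G}
    (h : H ∈ S.1) : ChainPoset.sing H ≤ S := Set.singleton_subset_iff.mpr h

/-- The pair `{H₁, H₂}` is contained in `S` whenever both elements are. -/
lemma ChainPoset.pair_le {G : Type*} [Group G] {H1 H2 : Subgroup G} (h : H1 ≤ H2)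
    {S : ChainPoset G} (h1 : H1 ∈ S.1) (h2 : H2 ∈ S.1) :
    ChainPoset.pair H1 H2 h ≤ S := by
  intro a ha
  rcases ha with rfl | ha
  · exact h1
  · simp only [Set.mem_singleton_iff] at ha; subst ha; exact h2

/-- Well-definedness: a compatible family pushed into `F S` does not depend on the
chosen element of `S`. -/
lemma compat_push {G : Type*} [Group G] (F : ChainPoset G ⥤ Type*)
    (y : ∀ H : Subgroup G, F.obj (ChainPoset.sing H))
    (hy : ∀ (H1 H2 : Subgroup G) (h : H1 < H2),
      F.map (homOfLE (ChainPoset.sing_le_pair_left h.le)) (y H1) =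
        F.map (homOfLE (ChainPoset.sing_le_pair_right h.le)) (y H2))
    {H1 H2 : Subgroup G} (h : H1 ≤ H2) {S : ChainPoset G}
    (h1 : H1 ∈ S.1) (h2 : H2 ∈ S.1) :
    F.map (homOfLE (ChainPoset.singLe h1)) (y H1) =
      F.map (homOfLE (ChainPoset.singLe h2)) (y H2) := by
  rcases eq_or_lt_of_le h with rfl | hlt
  · congr 1
  · have key := congrArg (F.map (homOfLE (ChainPoset.pair_le hlt.le h1 h2))) (hy H1 H2 hlt)
    rw [← FunctorToTypes.map_comp_apply, ← FunctorToTypes.map_comp_apply] at key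
    calc F.map (homOfLE (ChainPoset.singLe h1)) (y H1)
        = F.map (homOfLE (ChainPoset.sing_le_pair_left hlt.le) ≫
            homOfLE (ChainPoset.pair_le hlt.le h1 h2)) (y H1) := by congr 1
      _ = F.map (homOfLE (ChainPoset.sing_le_pair_right hlt.le) ≫
            homOfLE (ChainPoset.pair_le hlt.le h1 h2)) (y H2) := key
      _ = F.map (homOfLE (ChainPoset.singLe h2)) (y H2) := by congr 1

/-- **The limit over `P(G)` as compatible families at singletons.**  For a finite
abelian group `G` and a functor `F : P(G) ⥤ Type`, the map sending a section
`(x_S)_{S ∈ P(G)}` of `F` to its family of components at singletons is a bijection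
onto the set of families `(y_H)_H`, `y_H ∈ F({H})`, such that for all `H₁ ⊊ H₂` the
images of `y_{H₁}` and `y_{H₂}` in `F({H₁, H₂})` coincide. -/
theorem sections_equiv_compatible_families (G : Type*) [CommGroup G] [Finite G]
    (F : ChainPoset G ⥤ Type*) :
    Function.Bijective
      (fun x : F.sections =>
        (⟨fun H : Subgroup G => x.1 (ChainPoset.sing H),
          fun H1 H2 h =>
            (x.2 (homOfLE (ChainPoset.sing_le_pair_left h.le))).trans
              (x.2 (homOfLE (ChainPoset.sing_le_pair_right h.le))).symm⟩ :
          {y : ∀ H : Subgroup G, F.obj (ChainPoset.sing H) //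
            ∀ (H1 H2 : Subgroup G) (h : H1 < H2),
              F.map (homOfLE (ChainPoset.sing_le_pair_left h.le)) (y H1) =
                F.map (homOfLE (ChainPoset.sing_le_pair_right h.le)) (y H2)})) := by
  constructor
  · intro x1 x2 hx
    have hx' : ∀ H : Subgroup G, x1.1 (ChainPoset.sing H) = x2.1 (ChainPoset.sing H) :=
      fun H => congrFun (congrArg Subtype.val hx) H
    apply Subtype.ext
    funext S
    obtain ⟨H, hH⟩ := S.2.1
    rw [← x1.2 (homOfLE (ChainPoset.singLe hH)), ← x2.2 (homOfLE (ChainPoset.singLe hH)), hx']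
  · rintro ⟨y, hy⟩
    refine ⟨⟨fun S => F.map (homOfLE (ChainPoset.singLe S.2.1.choose_spec)) (y S.2.1.choose),
      ?_⟩, ?_⟩
    · rintro S T f
      have hmem : S.2.1.choose ∈ T.1 := leOfHom f S.2.1.choose_spec
      rw [← FunctorToTypes.map_comp_apply]
      have : (homOfLE (ChainPoset.singLe S.2.1.choose_spec) ≫ f) =
          homOfLE (ChainPoset.singLe hmem) := Subsingleton.elim _ _
      rw [this]
      rcases T.2.2.total hmem T.2.1.choose_spec with h | h
      · exact compat_push F y hy h hmem T.2.1.choose_spec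
      · exact (compat_push F y hy h T.2.1.choose_spec hmem).symm
    · apply Subtype.ext
      funext H
      dsimp only
      have hc : (ChainPoset.sing H).2.1.choose = H :=
        Set.mem_singleton_iff.mp (ChainPoset.sing H).2.1.choose_spec
      have hmemH : H ∈ (ChainPoset.sing H).1 := rfl
      rw [compat_push F y hy hc.le (ChainPoset.sing H).2.1.choose_spec hmemH,
        show homOfLE (ChainPoset.singLe hmemH) = 𝟙 _ from Subsingleton.elim _ _]
      simp
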